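/- Let s be a weak composition, T an s-decreasing tree, and (a,b), (c,d) distinct tree ascents of T. Let Z and Q be the s-tree rotations of T along (a,b) and (c,d) respectively. Then inv(Z ∨ Q) = ((inv(T)+(b,a))^tc + (d,c))^tc, and likewise inv(Z ∨ Q) = ((inv(T)+(d,c))^tc + (b,a))^tc, where ∨ denotes the join in s-weak order. -/

import Mathlib

open scoped Classical

/-- An `s`-decreasing tree with internal vertices `1,…,n` (the root is `n`), encoded by
recording, for each non-root internal vertex `v`, its parent `parent v` (an internal vertex
with a larger label, so that labels decrease away from the root) and the index `idx v` of
the child slot of `parent v` (among `0,…,s (parent v)`, left to right) containing `v`.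
Distinct internal vertices occupy distinct child slots; all remaining slots are leaves. -/
structure SDecTree (n : ℕ) (s : ℕ → ℕ) where
  parent : ℕ → ℕ
  idx : ℕ → ℕ
  parent_gt : ∀ v, 1 ≤ v → v < n → v < parent v
  parent_le : ∀ v, 1 ≤ v → v < n → parent v ≤ n
  idx_le : ∀ v, 1 ≤ v → v < n → idx v ≤ s (parent v)
  slot_inj : ∀ v w, 1 ≤ v → v < n → 1 ≤ w → w < n →
      parent v = parent w → idx v = idx w → v = w
  parent_out : ∀ v, v = 0 ∨ n ≤ v → parent v = 0
  idx_out : ∀ v, v = 0 ∨ n ≤ v → idx v = 0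

namespace SDecTree

variable {n : ℕ} {s : ℕ → ℕ}

/-- `y` is a weak ancestor of `x`, i.e. `x` is a labeled vertex of the subtree `T^y`. -/
def Descend (T : SDecTree n s) (x y : ℕ) : Prop :=
  ∃ k, T.parent^[k] x = y ∧ ∀ m ≤ k, 1 ≤ T.parent^[m] x ∧ T.parent^[m] x ≤ n

/-- `x` is a labeled vertex of the subtree `T^y_j` rooted at the `j`-th child of `y`. -/
def InSub (T : SDecTree n s) (y j x : ℕ) : Prop :=
  ∃ c, T.Descend x c ∧ T.parent c = y ∧ T.idx c = j

/-- `x` lies strictly left of `y` in the planar tree `T`. -/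
def LeftOf (T : SDecTree n s) (x y : ℕ) : Prop :=
  ∃ z j₁ j₂, j₁ < j₂ ∧ T.InSub z j₁ x ∧ T.InSub z j₂ y

/-- The cardinality `#_T(y,x)` of the pair `(y,x)`: it is `j` if `x ∈ T^y_j`
(so `0` if `x ∈ T^y_0` and `s y` if `x ∈ T^y_{s y}`), `0` if `x` is left of `y`, and
`s y` if `x` is right of `y`; it is `0` for out-of-range pairs. -/
noncomputable def card (T : SDecTree n s) (y x : ℕ) : ℕ :=
  if h : ∃ j, T.InSub y j x then h.choose
  else if 1 ≤ x ∧ x < y ∧ y ≤ n ∧ ¬ T.LeftOf x y then s y else 0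

/-- `x` is a labeled vertex of `T^a ∖ 0`, i.e. of `T^a` with `T^a_0` replaced by a leaf. -/
def InSubMinus0 (T : SDecTree n s) (a x : ℕ) : Prop :=
  x = a ∨ ∃ j, 0 < j ∧ T.InSub a j x

/-- `(a,b)` is a tree ascent of `T`. -/
def TreeAscent (T : SDecTree n s) (a b : ℕ) : Prop :=
  1 ≤ a ∧ a < b ∧ b ≤ n ∧
  (∃ i, i < s b ∧ T.InSub b i a) ∧
  (∀ e j, a < e → e < b → T.InSub e j a → j = s e) ∧
  (0 < s a → ∀ x, ¬ T.InSub a (s a) x)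

end SDecTree

/-- A multi-inversion set (encoded by its multiplicity function) is transitive:
if `a < b < c` then `#(b,a) = 0` or `#(c,a) ≥ #(c,b)`. -/
def IsTransitiveInv (I : ℕ → ℕ → ℕ) : Prop :=
  ∀ a b c, a < b → b < c → I b a = 0 ∨ I c b ≤ I c a

/-- The transitive closure of a multi-inversion set: the smallest (by inclusion, i.e.
pointwise on multiplicities) transitive multi-inversion set containing it. -/
noncomputable def tcInv (I : ℕ → ℕ → ℕ) : ℕ → ℕ → ℕ := fun y x =>
  sInf {m | ∃ J : ℕ → ℕ → ℕ, IsTransitiveInv J ∧ (∀ y' x', I y' x' ≤ J y' x') ∧ J y x = m}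

/-- Add one copy of the inversion `(b,a)` to `I`, capping the multiplicity at `s b`. -/
def addInv (s : ℕ → ℕ) (I : ℕ → ℕ → ℕ) (b a : ℕ) : ℕ → ℕ → ℕ := fun y x =>
  if y = b ∧ x = a then min (I y x + 1) (s y) else I y x

namespace SDecTree

variable {n : ℕ} {s : ℕ → ℕ}

/-- The `s`-weak order: `T ⪯ Z` iff `#_T(y,x) ≤ #_Z(y,x)` for all pairs. -/
def wle (T Z : SDecTree n s) : Prop := ∀ y x, T.card y x ≤ Z.card y x

/-- Strict `s`-weak order. -/
def wlt (T Z : SDecTree n s) : Prop := wle T Z ∧ ¬ wle Z T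

/-- Cover relation in the `s`-weak order. -/
def wcov (T Z : SDecTree n s) : Prop := wlt T Z ∧ ∀ U, wlt T U → wlt U Z → False

/-- `W` is the join of `T` and `Z` in the `s`-weak order. -/
def IsJoin (T Z W : SDecTree n s) : Prop :=
  wle T W ∧ wle Z W ∧ ∀ U, wle T U → wle Z U → wle W U

/-- `Z` is the `s`-tree rotation of `T` along the tree ascent `(a,b)`, i.e.
`inv Z = (inv T + (b,a))^tc`. -/
def IsRotation (T Z : SDecTree n s) (a b : ℕ) : Prop :=
  T.TreeAscent a b ∧
  ∀ y x, 1 ≤ x → x < y → y ≤ n → Z.card y x = tcInv (addInv s T.card b a) y x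

/-- The set `A_T(a,b)` of inversions added by a rotation producing `Z`: the pairs `(f,e)`
with `#_Z(f,e) > #_T(f,e)`. -/
def Aset (T Z : SDecTree n s) : Set (ℕ × ℕ) :=
  {p | T.card p.1 p.2 < Z.card p.1 p.2}

/-- The set `A_T(a,b)` described directly via the transitive closure. -/
def ARot (T : SDecTree n s) (a b : ℕ) : Set (ℕ × ℕ) :=
  {p | T.card p.1 p.2 < tcInv (addInv s T.card b a) p.1 p.2}

/-- The set `F_T(a,c)` (here `b` and `d` are the partners of `a` and `c` in the
respective tree ascents `(a,b)` and `(c,d)`): it is `{(d,e) : e ∈ T^a∖0}` if `b = c`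
and `a ∈ T^c_0`, and empty otherwise. -/
def Fset (T : SDecTree n s) (a b c d : ℕ) : Set (ℕ × ℕ) :=
  {p | b = c ∧ T.InSub c 0 a ∧ p.1 = d ∧ T.InSubMinus0 a p.2}

/-- `T` is an `s`-Tamari tree: `#_T(c,a) ≤ #_T(c,b)` whenever `a < b < c`. -/
def IsTamari (T : SDecTree n s) : Prop :=
  ∀ a b c, a < b → b < c → T.card c a ≤ T.card c b

/-- `(a,b)` is a Tamari tree ascent of `T`: `a` is a non-rightmost child of `b`. -/
def TamariAscent (T : SDecTree n s) (a b : ℕ) : Prop :=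
  1 ≤ a ∧ a < n ∧ T.parent a = b ∧ T.card b a < s b

/-- `Z` is the `s`-Tamari rotation of `T` along the Tamari tree ascent `(a,b)`. -/
def IsTamRotation (T Z : SDecTree n s) (a b : ℕ) : Prop :=
  T.TamariAscent a b ∧
  ∀ y x, 1 ≤ x → x < y → y ≤ n → Z.card y x = tcInv (addInv s T.card b a) y x

/-- Cover relation in the `s`-Tamari lattice. -/
def tamcov (T Z : SDecTree n s) : Prop :=
  IsTamari T ∧ IsTamari Z ∧ wlt T Z ∧ ∀ U, IsTamari U → wlt T U → wlt U Z → False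

/-- `W` is the join of `T` and `Z` in the `s`-Tamari lattice. -/
def IsTamJoin (T Z W : SDecTree n s) : Prop :=
  IsTamari W ∧ wle T W ∧ wle Z W ∧ ∀ U, IsTamari U → wle T U → wle Z U → wle W U

/-- The open interval `(T,Z)` in the `s`-weak order. -/
def OpenInterval (T Z : SDecTree n s) : Set (SDecTree n s) := {U | wlt T U ∧ wlt U Z}

/-- A set of trees forming a chain in the `s`-weak order. -/
def IsChainSet (C : Set (SDecTree n s)) : Prop :=
  C.Pairwise fun U V => wlt U V ∨ wlt V U

/-- The geometric realization of the order complex `Δ(T,Z)` of the open interval `(T,Z)`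
in the `s`-weak order: the space of finitely supported probability vectors on the vertex
set whose support is a chain of the open interval. -/
def orderComplex (T Z : SDecTree n s) : Set (SDecTree n s → ℝ) :=
  {f | (∀ U, 0 ≤ f U) ∧ (Function.support f).Finite ∧
    Function.support f ⊆ OpenInterval T Z ∧ IsChainSet (Function.support f) ∧
    ∑ᶠ U, f U = 1}

/-- The geometric realization of the order complex of the open interval `(T,Z)` in the
`s`-Tamari lattice. -/
def tamOrderComplex (T Z : SDecTree n s) : Set (SDecTree n s → ℝ) :=
  {f | (∀ U, 0 ≤ f U) ∧ (Function.support f).Finite ∧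
    Function.support f ⊆ {U | IsTamari U ∧ wlt T U ∧ wlt U Z} ∧
    IsChainSet (Function.support f) ∧ ∑ᶠ U, f U = 1}

end SDecTree

/-- The list of labels of the consecutive cover relations along a saturated chain,
recorded as a list of poset elements. -/
def labelsOf {α : Type*} (lab : α → α → ℕ) (L : List α) : List ℕ :=
  (L.zip L.tail).map fun p => lab p.1 p.2


/-!
The join `W = Z ∨ Q` has inversion set `(inv Z ∪ inv Q)^tc`. It lies above this closure because
inversion sets of trees are transitive; it lies below it because, for a transitive `K` and a
pair `(y,x)`, a comb-shaped tree lies above every tree whose inversions are bounded by `K` and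
has `#(y,x) = K(y,x)`.

The closure `(inv T + (b,a))^tc` is bounded by `inv T + {(b,e) : e ∈ T^a ∖ 0}`, which is
transitive by the ascent conditions; for a second ascent `(c,d)` this leaves `#(d,c)` unchanged.
Hence adding `(d,c)` to `inv Z` and closing gives the same set as closing `inv Z ∪ inv Q`, where
`inv Q = (inv T + (d,c))^tc`, and symmetrically.
-/

section TransitiveClosure

variable {I J : ℕ → ℕ → ℕ}

lemma tcInv_le (hJ : IsTransitiveInv J) (hIJ : I ≤ J) : tcInv I ≤ J :=
  fun _ _ => Nat.sInf_le ⟨J, hJ, fun y x => hIJ y x, rfl⟩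

lemma exists_isTransitiveInv_le (I : ℕ → ℕ → ℕ) : ∃ J, IsTransitiveInv J ∧ I ≤ J := by
  -- row maxima: constant in `x < y`, hence transitive
  refine ⟨fun y x => (Finset.range (max x y + 1)).sup (I y), ?_, fun y x => ?_⟩
  · intro a b c hab hbc
    right
    simp only [max_eq_right hbc.le, max_eq_right (hab.trans hbc).le, le_refl]
  · exact Finset.le_sup (Finset.mem_range.2 (Nat.lt_succ_of_le (le_max_left x y)))

private lemma exists_eq_tcInv (I : ℕ → ℕ → ℕ) (y x : ℕ) :
    ∃ J, IsTransitiveInv J ∧ I ≤ J ∧ J y x = tcInv I y x := by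
  obtain ⟨J₀, hJ₀, hIJ₀⟩ := exists_isTransitiveInv_le I
  obtain ⟨J, hJ, hIJ, hval⟩ := Nat.sInf_mem (s := {m | ∃ J : ℕ → ℕ → ℕ, IsTransitiveInv J ∧
    (∀ y' x', I y' x' ≤ J y' x') ∧ J y x = m}) ⟨J₀ y x, J₀, hJ₀, fun y' x' => hIJ₀ y' x', rfl⟩
  exact ⟨J, hJ, fun y' x' => hIJ y' x', hval⟩

lemma le_tcInv (I : ℕ → ℕ → ℕ) : I ≤ tcInv I := fun y x =>
  let ⟨_, _, hIJ, hval⟩ := exists_eq_tcInv I y x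
  hval ▸ hIJ y x

lemma isTransitiveInv_tcInv (I : ℕ → ℕ → ℕ) : IsTransitiveInv (tcInv I) := by
  intro a b c hab hbc
  obtain ⟨J, hJ, hIJ, hval⟩ := exists_eq_tcInv I c a
  rcases hJ a b c hab hbc with h | h
  · exact Or.inl (Nat.le_zero.1 (h ▸ tcInv_le hJ hIJ b a))
  · exact Or.inr ((tcInv_le hJ hIJ c b).trans (hval ▸ h))

lemma tcInv_mono (h : I ≤ J) : tcInv I ≤ tcInv J :=
  tcInv_le (isTransitiveInv_tcInv J) (h.trans (le_tcInv J))

lemma tcInv_eq_tcInv_of_le (hIJ : I ≤ tcInv J) (hJI : J ≤ tcInv I) : tcInv I = tcInv J :=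
  le_antisymm (tcInv_le (isTransitiveInv_tcInv J) hIJ) (tcInv_le (isTransitiveInv_tcInv I) hJI)

lemma tcInv_eq_zero_of_out_of_range {n : ℕ}
    (hI : ∀ y x, ¬(1 ≤ x ∧ x < y ∧ y ≤ n) → I y x = 0) {y x : ℕ}
    (hyx : ¬(1 ≤ x ∧ x < y ∧ y ≤ n)) : tcInv I y x = 0 := by
  let J : ℕ → ℕ → ℕ := fun y x => if 1 ≤ x ∧ x < y ∧ y ≤ n then tcInv I y x else 0
  have hJ : IsTransitiveInv J := by
    intro a b c hab hbc
    simp only [J]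
    split_ifs <;> first | omega | exact isTransitiveInv_tcInv I a b c hab hbc
  have hIJ : I ≤ J := by
    intro y x
    simp only [J]
    split_ifs with h
    exacts [le_tcInv I y x, (hI y x h).le]
  simpa [J, hyx] using tcInv_le hJ hIJ y x

end TransitiveClosure

lemma addInv_mono (s : ℕ → ℕ) {I J : ℕ → ℕ → ℕ} (h : I ≤ J) (b a : ℕ) :
    addInv s I b a ≤ addInv s J b a := by
  intro y x
  unfold addInv
  split_ifs
  · exact min_le_min_right _ (Nat.add_le_add_right (h y x) 1)
  · exact h y x

lemma le_addInv (s : ℕ → ℕ) (I : ℕ → ℕ → ℕ) {b a : ℕ} (h : I b a ≤ s b) :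
    I ≤ addInv s I b a := by
  intro y x
  unfold addInv
  split_ifs with hyx
  · obtain ⟨rfl, rfl⟩ := hyx
    exact le_min (Nat.le_succ _) h
  · exact le_rfl

lemma tcInv_addInv_tcInv_eq_tcInv_sup {s : ℕ → ℕ} {I : ℕ → ℕ → ℕ} {a b c d : ℕ}
    (hba : I b a ≤ s b) (hdc : I d c ≤ s d) (hfix : tcInv (addInv s I b a) d c = I d c) :
    tcInv (addInv s (tcInv (addInv s I b a)) d c) =
      tcInv (tcInv (addInv s I b a) ⊔ tcInv (addInv s I d c)) := by
  set Z := tcInv (addInv s I b a)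
  have hIZ : I ≤ Z := (le_addInv s I hba).trans (le_tcInv _)
  refine tcInv_eq_tcInv_of_le (fun y x => le_trans ?_ (le_tcInv _ y x)) (sup_le ?_ ?_)
  · by_cases h : y = d ∧ x = c
    · obtain ⟨rfl, rfl⟩ := h
      refine le_sup_of_le_right (le_trans (le_of_eq ?_) (le_tcInv _ y x))
      simp only [addInv, and_self, if_true, hfix]
    · exact le_sup_of_le_left (le_of_eq (if_neg h))
  · exact (le_addInv s Z (hfix ▸ hdc)).trans (le_tcInv _)
  · exact tcInv_mono (addInv_mono s hIZ d c)

namespace SDecTree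

open Relation

variable {n : ℕ} {s : ℕ → ℕ} {T : SDecTree n s} {x y z w j j' : ℕ}

def ParentStep (T : SDecTree n s) (u v : ℕ) : Prop :=
  1 ≤ u ∧ u < n ∧ T.parent u = v

lemma ParentStep.lt {u v : ℕ} (h : T.ParentStep u v) : u < v :=
  h.2.2 ▸ T.parent_gt u h.1 h.2.1

lemma ParentStep.le_n {u v : ℕ} (h : T.ParentStep u v) : v ≤ n :=
  h.2.2 ▸ T.parent_le u h.1 h.2.1

lemma descend_iff : T.Descend x y ↔ 1 ≤ x ∧ x ≤ n ∧ ReflTransGen T.ParentStep x y := by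
  constructor
  · rintro ⟨k, rfl, hk⟩
    induction k generalizing x with
    | zero =>
      have hx := hk 0 le_rfl
      simp only [Function.iterate_zero_apply] at hx
      exact ⟨hx.1, hx.2, ReflTransGen.refl⟩
    | succ k ih =>
      have hx := hk 0 (Nat.zero_le _)
      have hpx : 1 ≤ T.parent x := by simpa using (hk 1 (by omega)).1
      have hxn : x < n := by
        by_contra hxn
        rw [T.parent_out x (Or.inr (not_lt.1 hxn))] at hpx
        omega
      simp only [Function.iterate_zero_apply] at hx
      refine ⟨hx.1, hx.2, ReflTransGen.head ⟨hx.1, hxn, rfl⟩ ?_⟩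
      rw [Function.iterate_succ_apply]
      refine (ih fun m hm => ?_).2.2
      rw [← Function.iterate_succ_apply]
      exact hk (m + 1) (by omega)
  · rintro ⟨hx1, hxn, h⟩
    induction h using ReflTransGen.head_induction_on with
    | refl => exact ⟨0, rfl, fun m hm => by simpa [Nat.le_zero.1 hm] using ⟨hx1, hxn⟩⟩
    | head hstep _ ih =>
      obtain ⟨k, hk, hb⟩ := ih (hx1.trans hstep.lt.le) hstep.le_n
      refine ⟨k + 1, by rw [Function.iterate_succ_apply, hstep.2.2, hk], fun m hm => ?_⟩
      cases m with
      | zero => exact ⟨hx1, hxn⟩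
      | succ m =>
        rw [Function.iterate_succ_apply, hstep.2.2]
        exact hb m (by omega)

lemma Descend.bounds (h : T.Descend x y) : 1 ≤ x ∧ x ≤ n ∧ 1 ≤ y ∧ y ≤ n := by
  obtain ⟨k, rfl, hk⟩ := h
  have hx := hk 0 (Nat.zero_le k)
  simp only [Function.iterate_zero_apply] at hx
  exact ⟨hx.1, hx.2, hk k le_rfl⟩

lemma descend_refl (h1 : 1 ≤ x) (h2 : x ≤ n) : T.Descend x x :=
  descend_iff.2 ⟨h1, h2, ReflTransGen.refl⟩

lemma ParentStep.descend {u v : ℕ} (h : T.ParentStep u v) : T.Descend u v :=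
  descend_iff.2 ⟨h.1, h.2.1.le, ReflTransGen.single h⟩

lemma Descend.trans (h₁ : T.Descend x y) (h₂ : T.Descend y z) : T.Descend x z := by
  obtain ⟨hx1, hxn, h₁⟩ := descend_iff.1 h₁
  exact descend_iff.2 ⟨hx1, hxn, h₁.trans (descend_iff.1 h₂).2.2⟩

lemma Descend.le (h : T.Descend x y) : x ≤ y := by
  obtain ⟨-, -, hr⟩ := descend_iff.1 h
  clear h
  induction hr with
  | refl => exact le_rfl
  | tail _ hstep ih => exact ih.trans hstep.lt.le

lemma Descend.total (h₁ : T.Descend x y) (h₂ : T.Descend x z) :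
    T.Descend y z ∨ T.Descend z y := by
  have hu : Relator.RightUnique T.ParentStep := by
    rintro u v w ⟨-, -, rfl⟩ ⟨-, -, rfl⟩
    rfl
  rcases (descend_iff.1 h₁).2.2.total_of_right_unique hu (descend_iff.1 h₂).2.2 with h | h
  · exact Or.inl (descend_iff.2 ⟨h₁.bounds.2.2.1, h₁.bounds.2.2.2, h⟩)
  · exact Or.inr (descend_iff.2 ⟨h₂.bounds.2.2.1, h₂.bounds.2.2.2, h⟩)

lemma Descend.exists_child (h : T.Descend x y) (hne : x ≠ y) :
    ∃ c, T.Descend x c ∧ T.ParentStep c y := by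
  obtain ⟨hx1, hxn, h⟩ := descend_iff.1 h
  rcases h.cases_tail with rfl | ⟨c, hc, hstep⟩
  · exact absurd rfl hne
  · exact ⟨c, descend_iff.2 ⟨hx1, hxn, hc⟩, hstep⟩

lemma Descend.eq_of_parent_eq {c c' : ℕ} (h : T.Descend c c') (hp : T.parent c = T.parent c')
    (h1 : 1 ≤ c') (hn : c' < n) : c = c' := by
  rcases (descend_iff.1 h).2.2.cases_head with rfl | ⟨u, ⟨-, -, rfl⟩, hu⟩
  · rfl
  · have hle := (descend_iff.2 ⟨h1.trans (T.parent_gt c' h1 hn).le, T.parent_le c' h1 hn,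
      hp ▸ hu⟩).le
    have := T.parent_gt c' h1 hn
    omega

lemma descend_root {x : ℕ} (h1 : 1 ≤ x) (h2 : x ≤ n) : T.Descend x n := by
  rcases h2.eq_or_lt with rfl | hlt
  · exact descend_refl h1 le_rfl
  · have hstep : T.ParentStep x (T.parent x) := ⟨h1, hlt, rfl⟩
    exact hstep.descend.trans (descend_root (h1.trans hstep.lt.le) hstep.le_n)
termination_by n - x
decreasing_by have := T.parent_gt x h1 hlt; omega

lemma InSub.exists_child (hy : 1 ≤ y) (h : T.InSub y j x) :
    ∃ c, T.Descend x c ∧ T.ParentStep c y ∧ T.idx c = j := by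
  obtain ⟨c, hd, hp, hi⟩ := h
  have hcn : c < n := by
    refine hd.bounds.2.2.2.lt_of_ne fun hc => ?_
    rw [T.parent_out c (Or.inr hc.ge)] at hp
    omega
  exact ⟨c, hd, ⟨hd.bounds.2.2.1, hcn, hp⟩, hi⟩

lemma InSub.descend (hy : 1 ≤ y) (h : T.InSub y j x) : T.Descend x y := by
  obtain ⟨c, hd, hstep, -⟩ := h.exists_child hy
  exact hd.trans hstep.descend

lemma InSub.lt (hy : 1 ≤ y) (h : T.InSub y j x) : x < y := by
  obtain ⟨c, hd, hstep, -⟩ := h.exists_child hy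
  exact hd.le.trans_lt hstep.lt

lemma InSub.one_le (h : T.InSub y j x) : 1 ≤ x :=
  let ⟨_, hd, _⟩ := h
  hd.bounds.1

lemma InSub.le_n (hy : 1 ≤ y) (h : T.InSub y j x) : y ≤ n :=
  (h.descend hy).bounds.2.2.2

lemma InSub.le_s (h : T.InSub y j x) : j ≤ s y := by
  obtain ⟨c, hd, rfl, rfl⟩ := h
  rcases hd.bounds.2.2.2.lt_or_eq with hcn | rfl
  · exact T.idx_le c hd.bounds.2.2.1 hcn
  · rw [T.idx_out _ (Or.inr le_rfl)]
    exact Nat.zero_le _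

lemma InSub.eq_zero_of_zero (h : T.InSub 0 j x) : j = 0 := by
  obtain ⟨c, hd, hp, rfl⟩ := h
  rcases hd.bounds.2.2.2.lt_or_eq with hcn | rfl
  · have := T.parent_gt c hd.bounds.2.2.1 hcn
    omega
  · exact T.idx_out _ (Or.inr le_rfl)

lemma InSub.unique (h : T.InSub y j x) (h' : T.InSub y j' x) : j = j' := by
  rcases Nat.eq_zero_or_pos y with rfl | hy
  · rw [h.eq_zero_of_zero, h'.eq_zero_of_zero]
  obtain ⟨c, hd, hstep, rfl⟩ := h.exists_child hy
  obtain ⟨c', hd', hstep', rfl⟩ := h'.exists_child hy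
  have hp : T.parent c = T.parent c' := hstep.2.2.trans hstep'.2.2.symm
  rcases hd.total hd' with h | h
  · rw [h.eq_of_parent_eq hp hstep'.1 hstep'.2.1]
  · rw [h.eq_of_parent_eq hp.symm hstep.1 hstep.2.1]

lemma InSub.of_descend (hd : T.Descend x w) (h : T.InSub y j w) : T.InSub y j x :=
  let ⟨c, hdc, hp, hi⟩ := h
  ⟨c, hd.trans hdc, hp, hi⟩

lemma Descend.exists_inSub (h : T.Descend x y) (hne : x ≠ y) : ∃ j, T.InSub y j x :=
  let ⟨c, hd, hstep⟩ := h.exists_child hne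
  ⟨T.idx c, c, hd, hstep.2.2, rfl⟩

lemma InSub.eq_or_inSub {z₀ z₁ j₀ j₁ : ℕ} (hz₀ : 1 ≤ z₀) (hz₁ : 1 ≤ z₁)
    (h₀ : T.InSub z₀ j₀ x) (h₁ : T.InSub z₁ j₁ x) :
    (z₀ = z₁ ∧ j₀ = j₁) ∨ T.InSub z₁ j₁ z₀ ∨ T.InSub z₀ j₀ z₁ := by
  rcases (h₀.descend hz₀).total (h₁.descend hz₁) with hd | hd
  · by_cases he : z₀ = z₁
    · subst he
      exact Or.inl ⟨rfl, h₀.unique h₁⟩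
    · obtain ⟨k, hk⟩ := hd.exists_inSub he
      exact Or.inr (Or.inl ((hk.of_descend (h₀.descend hz₀)).unique h₁ ▸ hk))
  · by_cases he : z₁ = z₀
    · subst he
      exact Or.inl ⟨rfl, h₀.unique h₁⟩
    · obtain ⟨k, hk⟩ := hd.exists_inSub he
      exact Or.inr (Or.inr ((hk.of_descend (h₁.descend hz₁)).unique h₀ ▸ hk))

lemma LeftOf.exists_one_le (h : T.LeftOf x y) :
    ∃ z j₁ j₂, 1 ≤ z ∧ j₁ < j₂ ∧ T.InSub z j₁ x ∧ T.InSub z j₂ y := by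
  obtain ⟨z, j₁, j₂, hj, h₁, h₂⟩ := h
  rcases Nat.eq_zero_or_pos z with rfl | hz
  · exact absurd h₂.eq_zero_of_zero (by omega)
  · exact ⟨z, j₁, j₂, hz, hj, h₁, h₂⟩

lemma LeftOf.irrefl : ¬T.LeftOf x x := fun h =>
  let ⟨_, _, _, hj, h₁, h₂⟩ := h
  hj.ne (h₁.unique h₂)

lemma LeftOf.trans (h₁ : T.LeftOf x y) (h₂ : T.LeftOf y w) : T.LeftOf x w := by
  obtain ⟨z₀, u₀, v₀, hz₀, huv₀, hx₀, hy₀⟩ := h₁.exists_one_le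
  obtain ⟨z₁, u₁, v₁, hz₁, huv₁, hy₁, hw₁⟩ := h₂.exists_one_le
  rcases hy₀.eq_or_inSub hz₀ hz₁ hy₁ with ⟨rfl, rfl⟩ | h | h
  · exact ⟨z₀, u₀, v₁, huv₀.trans huv₁, hx₀, hw₁⟩
  · exact ⟨z₁, u₁, v₁, huv₁, h.of_descend (hx₀.descend hz₀), hw₁⟩
  · exact ⟨z₀, u₀, v₀, huv₀, hx₀, h.of_descend (hw₁.descend hz₁)⟩

lemma LeftOf.asymm (h : T.LeftOf x y) : ¬T.LeftOf y x := fun h' => LeftOf.irrefl (h.trans h')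

lemma LeftOf.of_descend_left (hd : T.Descend x w) (h : T.LeftOf w y) : T.LeftOf x y :=
  let ⟨z, j₁, j₂, hj, h₁, h₂⟩ := h
  ⟨z, j₁, j₂, hj, h₁.of_descend hd, h₂⟩

lemma LeftOf.of_descend_right (hd : T.Descend y w) (h : T.LeftOf x w) : T.LeftOf x y :=
  let ⟨z, j₁, j₂, hj, h₁, h₂⟩ := h
  ⟨z, j₁, j₂, hj, h₁, h₂.of_descend hd⟩

lemma LeftOf.one_le_right (h : T.LeftOf x y) : 1 ≤ y :=
  let ⟨_, _, _, _, _, h₂⟩ := h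
  h₂.one_le

lemma LeftOf.one_le_left (h : T.LeftOf x y) : 1 ≤ x :=
  let ⟨_, _, _, _, h₁, _⟩ := h
  h₁.one_le

lemma LeftOf.left_not_inSub (h : T.LeftOf x y) : ¬T.InSub y j x := fun hin =>
  LeftOf.irrefl (h.of_descend_right (hin.descend h.one_le_right))

lemma LeftOf.right_not_inSub (h : T.LeftOf x y) : ¬T.InSub x j y := fun hin =>
  LeftOf.irrefl (h.of_descend_left (hin.descend h.one_le_left))

lemma descend_or_leftOf_or_leftOf (hx : 1 ≤ x) (hxy : x < y) (hy : y ≤ n) :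
    T.Descend x y ∨ T.LeftOf x y ∨ T.LeftOf y x := by
  by_cases hd : T.Descend x y
  · exact Or.inl hd
  right
  have hcommon : {z | T.Descend x z ∧ T.Descend y z}.Nonempty :=
    ⟨n, descend_root hx (by omega), descend_root (by omega) hy⟩
  obtain ⟨hmx, hmy⟩ := Nat.sInf_mem hcommon
  set m := sInf {z | T.Descend x z ∧ T.Descend y z}
  have hx_ne : x ≠ m := fun he => by have := hmy.le; omega
  have hy_ne : y ≠ m := fun he => hd (he ▸ hmx)
  obtain ⟨cx, hcx, hstepx⟩ := hmx.exists_child hx_ne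
  obtain ⟨cy, hcy, hstepy⟩ := hmy.exists_child hy_ne
  have hcne : cx ≠ cy := by
    rintro rfl
    have := Nat.sInf_le (show cx ∈ {z | T.Descend x z ∧ T.Descend y z} from ⟨hcx, hcy⟩)
    have := hstepx.lt
    omega
  have hidx : T.idx cx ≠ T.idx cy := fun he =>
    hcne (T.slot_inj cx cy hstepx.1 hstepx.2.1 hstepy.1 hstepy.2.1
      (hstepx.2.2.trans hstepy.2.2.symm) he)
  have hix : T.InSub m (T.idx cx) x := ⟨cx, hcx, hstepx.2.2, rfl⟩
  have hiy : T.InSub m (T.idx cy) y := ⟨cy, hcy, hstepy.2.2, rfl⟩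
  rcases hidx.lt_or_gt with h | h
  · exact Or.inl ⟨m, _, _, h, hix, hiy⟩
  · exact Or.inr ⟨m, _, _, h, hiy, hix⟩

lemma card_eq_of_inSub (h : T.InSub y j x) : T.card y x = j := by
  rw [card, dif_pos ⟨j, h⟩]
  exact (Exists.choose_spec (⟨j, h⟩ : ∃ j, T.InSub y j x)).unique h

lemma card_eq_zero_of_out_of_range (h : ¬(1 ≤ x ∧ x < y ∧ y ≤ n)) : T.card y x = 0 := by
  rw [card]
  split_ifs with hin hrange
  · have hj := Exists.choose_spec hin
    rcases Nat.eq_zero_or_pos y with rfl | hy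
    · exact hj.eq_zero_of_zero
    · exact absurd ⟨hj.one_le, hj.lt hy, hj.le_n hy⟩ h
  · exact absurd ⟨hrange.1, hrange.2.1, hrange.2.2.1⟩ h
  · rfl

lemma card_le (T : SDecTree n s) (y x : ℕ) : T.card y x ≤ s y := by
  rw [card]
  split_ifs with hin
  · exact (Exists.choose_spec hin).le_s
  · exact le_rfl
  · exact Nat.zero_le _

lemma card_eq_zero_of_leftOf (h : T.LeftOf x y) : T.card y x = 0 := by
  rw [card, dif_neg fun ⟨_, hj⟩ => h.left_not_inSub hj, if_neg fun hr => hr.2.2.2 h]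

lemma card_eq_s_of_leftOf (hx : 1 ≤ x) (hxy : x < y) (hy : y ≤ n) (h : T.LeftOf y x) :
    T.card y x = s y := by
  rw [card, dif_neg fun ⟨_, hj⟩ => h.right_not_inSub hj, if_pos ⟨hx, hxy, hy, h.asymm⟩]

lemma Descend.inSub_card (hd : T.Descend x y) (hne : x ≠ y) : T.InSub y (T.card y x) x :=
  let ⟨_, hj⟩ := hd.exists_inSub hne
  (card_eq_of_inSub hj).symm ▸ hj

lemma card_eq_of_descend (hd : T.Descend x w) (hwz : w < z) : T.card z x = T.card z w := by
  have hw := hd.bounds.2.2.1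
  by_cases hzn : z ≤ n
  · rcases descend_or_leftOf_or_leftOf hw hwz hzn with h | h | h
    · exact card_eq_of_inSub ((h.inSub_card (by omega)).of_descend hd)
    · rw [card_eq_zero_of_leftOf h, card_eq_zero_of_leftOf (h.of_descend_left hd)]
    · rw [card_eq_s_of_leftOf hw hwz hzn h,
        card_eq_s_of_leftOf hd.bounds.1 (hd.le.trans_lt hwz) hzn (h.of_descend_right hd)]
  · rw [card_eq_zero_of_out_of_range (by omega), card_eq_zero_of_out_of_range (by omega)]

lemma range_of_card_ne_zero (h : T.card y x ≠ 0) : 1 ≤ x ∧ x < y ∧ y ≤ n :=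
  not_not.1 fun hr => h (card_eq_zero_of_out_of_range hr)

lemma card_le_card_of_leftOf {p q r : ℕ} (hqp : T.LeftOf q p) (hpq : p < q) (hqr : q < r)
    (hr : r ≤ n) : T.card r q ≤ T.card r p := by
  rcases descend_or_leftOf_or_leftOf (T := T) hqp.one_le_left hqr hr with hq | hq | hq
  · rcases descend_or_leftOf_or_leftOf (T := T) hqp.one_le_right (hpq.trans hqr) hr
      with hp | hp | hp
    · by_contra! hlt
      exact hqp.asymm ⟨r, _, _, hlt, hp.inSub_card (by omega), hq.inSub_card (by omega)⟩
    · exact absurd (hp.of_descend_right hq) hqp.asymm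
    · rw [card_eq_s_of_leftOf hqp.one_le_right (hpq.trans hqr) hr hp]
      exact T.card_le r q
  · rw [card_eq_zero_of_leftOf hq]
    exact Nat.zero_le _
  · rw [card_eq_s_of_leftOf hqp.one_le_right (hpq.trans hqr) hr (hq.trans hqp)]
    exact T.card_le r q

lemma isTransitiveInv_card (T : SDecTree n s) : IsTransitiveInv T.card := by
  intro p q r hpq hqr
  by_cases h0 : T.card q p = 0
  · exact Or.inl h0
  right
  obtain ⟨hp, -, hq⟩ := range_of_card_ne_zero h0
  by_cases hr : r ≤ n
  · rcases descend_or_leftOf_or_leftOf hp hpq hq with h | h | h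
    · exact (card_eq_of_descend h hqr).ge
    · exact absurd (card_eq_zero_of_leftOf h) h0
    · exact card_le_card_of_leftOf h hpq hqr hr
  · rw [card_eq_zero_of_out_of_range (by omega)]
    exact Nat.zero_le _

variable {a b c d : ℕ}

lemma TreeAscent.descend (hab : T.TreeAscent a b) : T.Descend a b :=
  let ⟨ha, hlt, _, ⟨_, _, hin⟩, _⟩ := hab
  hin.descend (ha.trans hlt.le)

lemma TreeAscent.descend_of_inSubMinus0 (hab : T.TreeAscent a b) (hx : T.InSubMinus0 a x) :
    T.Descend x a := by
  rcases hx with rfl | ⟨j, -, hj⟩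
  · exact descend_refl hab.1 hab.descend.bounds.2.1
  · exact hj.descend hab.1

lemma InSubMinus0.of_inSub (h : T.InSubMinus0 a y) (hin : T.InSub y j x) (hj : 0 < j) :
    T.InSubMinus0 a x := by
  rcases h with rfl | ⟨j', hj', hin'⟩
  · exact Or.inr ⟨j, hj, hin⟩
  · exact Or.inr ⟨j', hj', hin'.of_descend (hin.descend hin'.one_le)⟩

lemma TreeAscent.card_lt_of_leftOf (hab : T.TreeAscent a b) (hl : T.LeftOf a x) (hxb : x < b) :
    T.card b a < T.card b x := by
  obtain ⟨ha, hlt, hbn, ⟨i, hi, hin⟩, hpath, -⟩ := hab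
  obtain ⟨z, p, q, hz, hpq, hpa, hqx⟩ := hl.exists_one_le
  rcases hin.eq_or_inSub (by omega) hz hpa with ⟨rfl, rfl⟩ | hbz | hzb
  · rw [card_eq_of_inSub hin, card_eq_of_inSub hqx]
    exact hpq
  · rw [card_eq_of_inSub hin, card_eq_s_of_leftOf hqx.one_le hxb hbn ⟨z, p, q, hpq, hbz, hqx⟩]
    exact hi
  · -- `a < z < b`: condition (ii) puts `a` in the last slot of `z`, leaving no slot `q > p`
    have := hpath z p (hpa.lt hz) (hzb.lt (by omega)) hpa
    have := hqx.le_s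
    omega

lemma TreeAscent.inSubMinus0_or_card_lt (hab : T.TreeAscent a b) (hy : T.InSubMinus0 a y)
    (hxy : x < y) (hl : T.LeftOf y x) :
    T.InSubMinus0 a x ∨ T.card b a < T.card b x := by
  have hxb : x < b := hxy.trans_le ((hab.descend_of_inSubMinus0 hy).trans hab.descend).le
  rcases hy with rfl | ⟨jy, hjy, hay⟩
  · exact Or.inr (hab.card_lt_of_leftOf hl hxb)
  obtain ⟨z, p, q, hz, hpq, hpy, hqx⟩ := hl.exists_one_le
  rcases hay.eq_or_inSub hab.1 hz hpy with ⟨rfl, rfl⟩ | haz | hza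
  · exact Or.inl (Or.inr ⟨q, by omega, hqx⟩)
  · exact Or.inr (hab.card_lt_of_leftOf ⟨z, p, q, hpq, haz, hqx⟩ hxb)
  · exact Or.inl (Or.inr ⟨jy, hjy, hza.of_descend (hqx.descend hz)⟩)

/-- The paper's explicit formula for the inversion set of the rotation along `(a,b)`. -/
noncomputable def rotationInv (T : SDecTree n s) (a b : ℕ) : ℕ → ℕ → ℕ := fun y x =>
  T.card y x + if y = b ∧ T.InSubMinus0 a x then 1 else 0

lemma card_le_rotationInv (T : SDecTree n s) (a b : ℕ) : T.card ≤ T.rotationInv a b :=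
  fun _ _ => Nat.le_add_right _ _

lemma rotationInv_apply_of_not (h : ¬(y = b ∧ T.InSubMinus0 a x)) :
    T.rotationInv a b y x = T.card y x := by
  simp only [rotationInv, if_neg h, add_zero]

lemma TreeAscent.rotationInv_apply_of_inSubMinus0 (hab : T.TreeAscent a b)
    (hx : T.InSubMinus0 a x) : T.rotationInv a b b x = T.card b a + 1 := by
  rw [rotationInv, if_pos ⟨rfl, hx⟩, card_eq_of_descend (hab.descend_of_inSubMinus0 hx) hab.2.1]

lemma TreeAscent.rotationInv_le_rotationInv {p q : ℕ} (hab : T.TreeAscent a b) (hpq : p < q)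
    (hqb : q < b) (hcard : T.card q p ≠ 0) : T.rotationInv a b b q ≤ T.rotationInv a b b p := by
  by_cases hq : T.InSubMinus0 a q
  · rw [hab.rotationInv_apply_of_inSubMinus0 hq]
    by_cases hp : T.InSubMinus0 a p
    · rw [hab.rotationInv_apply_of_inSubMinus0 hp]
    refine le_trans ?_ (card_le_rotationInv T a b b p)
    obtain ⟨hp1, -, hqn⟩ := range_of_card_ne_zero hcard
    rcases descend_or_leftOf_or_leftOf hp1 hpq hqn with h | h | h
    · exact absurd (hq.of_inSub (h.inSub_card hpq.ne) (Nat.pos_of_ne_zero hcard)) hp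
    · exact absurd (card_eq_zero_of_leftOf h) hcard
    · exact (hab.inSubMinus0_or_card_lt hq hpq h).resolve_left hp
  · rw [rotationInv_apply_of_not fun h => hq h.2]
    exact ((isTransitiveInv_card T p q b hpq hqb).resolve_left hcard).trans
      (card_le_rotationInv T a b b p)

lemma TreeAscent.isTransitiveInv_rotationInv (hab : T.TreeAscent a b) :
    IsTransitiveInv (T.rotationInv a b) := by
  intro p q r hpq hqr
  by_cases h0 : T.rotationInv a b q p = 0
  · exact Or.inl h0
  right
  by_cases hrb : r = b
  · subst hrb
    rw [rotationInv_apply_of_not fun h => hqr.ne h.1] at h0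
    exact hab.rotationInv_le_rotationInv hpq hqr h0
  rw [rotationInv_apply_of_not fun h => hrb h.1, rotationInv_apply_of_not fun h => hrb h.1]
  by_cases hcard : T.card q p = 0
  · obtain ⟨rfl, hp⟩ : q = b ∧ T.InSubMinus0 a p := by
      by_contra h
      exact h0 (by rwa [rotationInv_apply_of_not h])
    exact (card_eq_of_descend ((hab.descend_of_inSubMinus0 hp).trans hab.descend) hqr).ge
  · exact (isTransitiveInv_card T p q r hpq hqr).resolve_left hcard

lemma TreeAscent.tcInv_addInv_le_rotationInv (hab : T.TreeAscent a b) :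
    tcInv (addInv s T.card b a) ≤ T.rotationInv a b := by
  refine tcInv_le hab.isTransitiveInv_rotationInv fun y x => ?_
  unfold addInv
  split_ifs with h
  · obtain ⟨rfl, rfl⟩ := h
    rw [hab.rotationInv_apply_of_inSubMinus0 (Or.inl rfl)]
    exact min_le_left _ _
  · exact card_le_rotationInv T a b y x

lemma TreeAscent.not_eq_and_inSubMinus0 (hab : T.TreeAscent a b) (hcd : T.TreeAscent c d)
    (hne : (a, b) ≠ (c, d)) : ¬(d = b ∧ T.InSubMinus0 a c) := by
  rintro ⟨rfl, rfl | ⟨j, hj, hac⟩⟩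
  · exact hne rfl
  · -- condition (ii) for `(c,d)` puts `c` in `T^a_{s a}`, a leaf by condition (iii) for `(a,b)`
    have hjs := hcd.2.2.2.2.1 a j (hac.lt hab.1) hab.2.1 hac
    exact hab.2.2.2.2.2 (hjs ▸ hj) c (hjs ▸ hac)

lemma TreeAscent.tcInv_addInv_apply_of_ne (hab : T.TreeAscent a b) (hcd : T.TreeAscent c d)
    (hne : (a, b) ≠ (c, d)) : tcInv (addInv s T.card b a) d c = T.card d c := by
  refine le_antisymm ?_ ((le_addInv s T.card (T.card_le b a)).trans (le_tcInv _) d c)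
  calc tcInv (addInv s T.card b a) d c ≤ T.rotationInv a b d c :=
        hab.tcInv_addInv_le_rotationInv d c
    _ = T.card d c := rotationInv_apply_of_not (hab.not_eq_and_inSubMinus0 hcd hne)

section CombParent

noncomputable def combParent (y₀ : ℕ) (B : ℕ → Prop) (x : ℕ) : ℕ :=
  sInf {w | x < w ∧ (y₀ ≤ w ∨ (B w ↔ B x))}

lemma combParent_spec (y₀ : ℕ) (B : ℕ → Prop) (x : ℕ) :
    x < combParent y₀ B x ∧ (y₀ ≤ combParent y₀ B x ∨ (B (combParent y₀ B x) ↔ B x)) :=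
  Nat.sInf_mem (⟨max (x + 1) y₀, by omega, Or.inl (le_max_right _ _)⟩ :
    {w | x < w ∧ (y₀ ≤ w ∨ (B w ↔ B x))}.Nonempty)

variable {y₀ : ℕ} {B : ℕ → Prop}

lemma combParent_le {x w : ℕ} (hxw : x < w) (hw : y₀ ≤ w ∨ (B w ↔ B x)) :
    combParent y₀ B x ≤ w :=
  Nat.sInf_le ⟨hxw, hw⟩

lemma combParent_eq_of_lt {v w : ℕ} (hvw : v < w)
    (hp : combParent y₀ B v = combParent y₀ B w) :
    combParent y₀ B v = y₀ ∧ ¬(B v ↔ B w) := by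
  have hw : w < y₀ ∧ ¬(B w ↔ B v) := by
    by_contra! hw
    have := combParent_le (B := B) hvw
      (if h : y₀ ≤ w then Or.inl h else Or.inr (hw (not_le.1 h)))
    have := (combParent_spec y₀ B w).1
    omega
  have hpw : combParent y₀ B w ≤ y₀ := combParent_le hw.1 (Or.inl le_rfl)
  refine ⟨?_, fun h => hw.2 h.symm⟩
  rcases (combParent_spec y₀ B v).2 with hv | hv
  · omega
  rcases (combParent_spec y₀ B w).2 with hw' | hw'
  · omega
  · exact absurd (hw'.symm.trans (hp ▸ hv)) hw.2

end CombParent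

/-- The comb: the vertices `≥ y₀` form a right spine; below `y₀` each `B`-class is a chain of
rightmost children hanging from `y₀`, the `B`-class in slot `κ`, its complement in slot `s y₀`. -/
noncomputable def comb (n : ℕ) (s : ℕ → ℕ) (y₀ κ : ℕ) (B : ℕ → Prop) (hy₀ : y₀ ≤ n)
    (hκ : κ ≤ s y₀) (hB : κ = s y₀ → ∀ x, 1 ≤ x → x < y₀ → B x) : SDecTree n s where
  parent x := if 1 ≤ x ∧ x < n then combParent y₀ B x else 0
  idx x := if 1 ≤ x ∧ x < n then
    (if combParent y₀ B x = y₀ ∧ B x then κ else s (combParent y₀ B x)) else 0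
  parent_gt x h1 h2 := by
    rw [if_pos ⟨h1, h2⟩]
    exact (combParent_spec y₀ B x).1
  parent_le x h1 h2 := by
    rw [if_pos ⟨h1, h2⟩]
    exact (combParent_le (B := B) (show x < max (x + 1) y₀ by omega)
      (Or.inl (le_max_right _ _))).trans (by omega)
  idx_le x h1 h2 := by
    simp only [if_pos (⟨h1, h2⟩ : 1 ≤ x ∧ x < n)]
    split_ifs with h
    · rw [h.1]
      exact hκ
    · exact le_rfl
  slot_inj v w hv1 hvn hw1 hwn hp hi := by
    simp only [if_pos (⟨hv1, hvn⟩ : 1 ≤ v ∧ v < n), if_pos (⟨hw1, hwn⟩ : 1 ≤ w ∧ w < n)] at hp hi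
    by_contra hne
    wlog hvw : v < w generalizing v w
    · exact this w v hw1 hwn hv1 hvn hp.symm hi.symm (Ne.symm hne) (by omega)
    obtain ⟨hpv, hBvw⟩ := combParent_eq_of_lt hvw hp
    have hvy := (combParent_spec y₀ B v).1
    have hwy := (combParent_spec y₀ B w).1
    rw [← hp, hpv] at hi hwy
    rw [hpv] at hvy
    have hκs : κ = s y₀ := by
      by_cases hv : B v
      · have hw : ¬B w := fun hw => hBvw ⟨fun _ => hw, fun _ => hv⟩
        simpa [hv, hw] using hi
      · have hw : B w := by_contra fun hw => hBvw ⟨fun h => absurd h hv, fun h => absurd h hw⟩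
        simpa [hv, hw] using hi.symm
    exact hBvw ⟨fun _ => hB hκs w hw1 hwy, fun _ => hB hκs v hv1 hvy⟩
  parent_out x hx := if_neg (by omega)
  idx_out x hx := if_neg (by omega)

section CombCard

variable {y₀ κ : ℕ} {B : ℕ → Prop} {hy₀ : y₀ ≤ n} {hκ : κ ≤ s y₀}
  {hB : κ = s y₀ → ∀ x, 1 ≤ x → x < y₀ → B x}

local notation "𝒞" => comb n s y₀ κ B hy₀ hκ hB

lemma comb_parentStep (h1 : 1 ≤ x) (h2 : x < n) : (𝒞).ParentStep x (combParent y₀ B x) :=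
  ⟨h1, h2, if_pos ⟨h1, h2⟩⟩

lemma comb_parent (h : (𝒞).ParentStep x y) : combParent y₀ B x = y :=
  (if_pos (⟨h.1, h.2.1⟩ : 1 ≤ x ∧ x < n)).symm.trans h.2.2

lemma comb_idx (h1 : 1 ≤ x) (h2 : x < n) :
    (𝒞).idx x = if combParent y₀ B x = y₀ ∧ B x then κ else s (combParent y₀ B x) :=
  if_pos ⟨h1, h2⟩

lemma comb_descend {x w : ℕ} (h1 : 1 ≤ x) (hxw : x ≤ w) (hw : w ≤ n)
    (hcls : y₀ ≤ w ∨ (B w ↔ B x)) : (𝒞).Descend x w := by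
  rcases hxw.eq_or_lt with rfl | hlt
  · exact descend_refl h1 hw
  have hp := combParent_spec y₀ B x
  have hpw : combParent y₀ B x ≤ w := combParent_le hlt hcls
  refine (comb_parentStep h1 (by omega)).descend.trans (comb_descend (by omega) hpw hw ?_)
  rcases hcls, hp.2 with ⟨h | h, h' | h'⟩
  · exact Or.inl h
  · exact Or.inl h
  · exact Or.inl (h'.trans hpw)
  · exact Or.inr (h.trans h'.symm)
termination_by w - x

lemma comb_class (hd : (𝒞).Descend x y) (hy : y < y₀) : B y ↔ B x := by
  obtain ⟨-, -, hr⟩ := descend_iff.1 hd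
  clear hd
  induction hr with
  | refl => exact Iff.rfl
  | tail _ hstep ih =>
    rw [← comb_parent hstep]
    exact ((combParent_spec y₀ B _).2.resolve_left (by rw [comb_parent hstep]; omega)).trans
      (ih (hstep.lt.trans hy))

lemma comb_inSub_hub (h1 : 1 ≤ x) (hx : x < y₀) :
    (𝒞).InSub y₀ (if B x then κ else s y₀) x := by
  have hd : (𝒞).Descend x y₀ := comb_descend h1 hx.le hy₀ (Or.inl le_rfl)
  obtain ⟨c, hxc, hstep⟩ := hd.exists_child hx.ne
  refine ⟨c, hxc, hstep.2.2, ?_⟩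
  rw [comb_idx hstep.1 hstep.2.1, comb_parent hstep, comb_class hxc hstep.lt]
  simp

lemma comb_card_of_descend (hd : (𝒞).Descend x y) (hne : x ≠ y) (hy : y ≠ y₀) :
    (𝒞).card y x = s y := by
  obtain ⟨c, hxc, hstep⟩ := hd.exists_child hne
  refine card_eq_of_inSub ⟨c, hxc, hstep.2.2, ?_⟩
  rw [comb_idx hstep.1 hstep.2.1, comb_parent hstep, if_neg fun h => hy h.1]

lemma comb_card (h1 : 1 ≤ x) (hxy : x < y) (hy : y ≤ n) :
    (𝒞).card y x = if y = y₀ then (if B x then κ else s y₀)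
      else if y < y₀ ∧ B x ∧ ¬B y then 0 else s y := by
  by_cases hyy : y = y₀
  · subst hyy
    rw [if_pos rfl]
    exact card_eq_of_inSub (comb_inSub_hub h1 hxy)
  rw [if_neg hyy]
  by_cases hcls : y₀ ≤ y ∨ (B y ↔ B x)
  · have hnot : ¬(y < y₀ ∧ B x ∧ ¬B y) := fun ⟨hlt, hBx, hBy⟩ =>
      hcls.elim (fun h => absurd hlt (not_lt.2 h)) fun h => hBy (h.2 hBx)
    rw [if_neg hnot]
    exact comb_card_of_descend (comb_descend h1 hxy.le hy hcls) hxy.ne hyy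
  obtain ⟨hyy₀, hdiff⟩ : y < y₀ ∧ ¬(B y ↔ B x) := by
    simp only [not_or, not_le] at hcls
    exact hcls
  have hxB : (𝒞).InSub y₀ (if B x then κ else s y₀) x := comb_inSub_hub h1 (hxy.trans hyy₀)
  have hyB : (𝒞).InSub y₀ (if B y then κ else s y₀) y := comb_inSub_hub (h1.trans hxy.le) hyy₀
  have hκs : κ < s y₀ := hκ.lt_of_ne fun h =>
    hdiff ⟨fun _ => hB h x h1 (hxy.trans hyy₀), fun _ => hB h y (h1.trans hxy.le) hyy₀⟩
  by_cases hBx : B x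
  · have hBy : ¬B y := fun hBy => hdiff ⟨fun _ => hBx, fun _ => hBy⟩
    rw [if_pos ⟨hyy₀, hBx, hBy⟩]
    rw [if_pos hBx] at hxB
    rw [if_neg hBy] at hyB
    exact card_eq_zero_of_leftOf ⟨y₀, κ, s y₀, hκs, hxB, hyB⟩
  · have hBy : B y := by_contra fun hBy => hdiff ⟨fun h => absurd h hBy, fun h => absurd h hBx⟩
    rw [if_neg fun h => hBx h.2.1]
    rw [if_neg hBx] at hxB
    rw [if_pos hBy] at hyB
    exact card_eq_s_of_leftOf h1 hxy hy ⟨y₀, κ, s y₀, hκs, hyB, hxB⟩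

end CombCard

theorem exists_wle_card_eq {K : ℕ → ℕ → ℕ} (hK : IsTransitiveInv K) {y₀ x₀ : ℕ}
    (hKs : ∀ x, K y₀ x ≤ s y₀) (hx₀ : 1 ≤ x₀) (hxy₀ : x₀ < y₀) (hy₀ : y₀ ≤ n) :
    ∃ U : SDecTree n s, (∀ V : SDecTree n s, V.card ≤ K → wle V U) ∧
      U.card y₀ x₀ = K y₀ x₀ := by
  refine ⟨comb n s y₀ (K y₀ x₀) (fun x => K y₀ x ≤ K y₀ x₀) hy₀ (hKs x₀)
    (fun h x _ _ => h ▸ hKs x), fun V hV y x => ?_, ?_⟩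
  · by_cases hr : 1 ≤ x ∧ x < y ∧ y ≤ n
    · rw [comb_card hr.1 hr.2.1 hr.2.2]
      split_ifs with hyy hBx hyx
      · subst hyy
        exact (hV y x).trans hBx
      · exact hyy ▸ V.card_le y x
      · -- here `K(y₀,x) ≤ κ < K(y₀,y)`, so transitivity forces `K(y,x) = 0`
        obtain ⟨hyy₀, hBx, hBy⟩ := hyx
        rcases hK x y y₀ hr.2.1 hyy₀ with h | h
        · exact (hV y x).trans h.le
        · exact absurd (h.trans hBx) hBy
      · exact V.card_le y x
    · rw [card_eq_zero_of_out_of_range hr]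
      exact Nat.zero_le _
  · rw [comb_card hx₀ hxy₀ hy₀, if_pos rfl, if_pos le_rfl]

theorem IsJoin.card_eq {Z Q W : SDecTree n s} (hW : IsJoin Z Q W) :
    W.card = tcInv (Z.card ⊔ Q.card) := by
  have hle : tcInv (Z.card ⊔ Q.card) ≤ W.card :=
    tcInv_le W.isTransitiveInv_card (sup_le hW.1 hW.2.1)
  refine le_antisymm (fun y x => ?_) hle
  by_cases hr : 1 ≤ x ∧ x < y ∧ y ≤ n
  · obtain ⟨U, hU, hUyx⟩ := exists_wle_card_eq (isTransitiveInv_tcInv (Z.card ⊔ Q.card))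
      (fun x => (hle y x).trans (W.card_le y x)) hr.1 hr.2.1 hr.2.2
    exact (hW.2.2 U (hU Z (le_sup_left.trans (le_tcInv _)))
      (hU Q (le_sup_right.trans (le_tcInv _))) y x).trans hUyx.le
  · rw [card_eq_zero_of_out_of_range hr]
    exact Nat.zero_le _

theorem IsRotation.card_eq {Z : SDecTree n s} {a b : ℕ} (hZ : IsRotation T Z a b) :
    Z.card = tcInv (addInv s T.card b a) := by
  funext y x
  by_cases hr : 1 ≤ x ∧ x < y ∧ y ≤ n
  · exact hZ.2 y x hr.1 hr.2.1 hr.2.2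
  · obtain ⟨ha, hab, hbn, -⟩ := hZ.1
    rw [card_eq_zero_of_out_of_range hr, tcInv_eq_zero_of_out_of_range (fun y x hyx => ?_) hr]
    unfold addInv
    rw [if_neg (by omega), card_eq_zero_of_out_of_range hyx]

end SDecTree

/-- `inv (Z ∨ Q) = ((inv T + (b,a))^tc + (d,c))^tc`, and the same with the
two added pairs in the other order, for `Z`, `Q` the rotations of `T` along distinct
tree ascents `(a,b)`, `(c,d)`. -/
theorem join_of_two_rotations (n : ℕ) (s : ℕ → ℕ) (T Z Q W : SDecTree n s)
    (a b c d : ℕ) (hne : (a, b) ≠ (c, d))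
    (hZ : SDecTree.IsRotation T Z a b) (hQ : SDecTree.IsRotation T Q c d)
    (hW : SDecTree.IsJoin Z Q W) :
    ∀ y x, 1 ≤ x → x < y → y ≤ n →
      W.card y x = tcInv (addInv s (tcInv (addInv s T.card b a)) d c) y x ∧
      W.card y x = tcInv (addInv s (tcInv (addInv s T.card d c)) b a) y x := by
  intro y x _ _ _
  have hjoin := hW.card_eq
  rw [hZ.card_eq, hQ.card_eq] at hjoin
  constructor
  · rw [hjoin, tcInv_addInv_tcInv_eq_tcInv_sup (T.card_le b a) (T.card_le d c)
      (hZ.1.tcInv_addInv_apply_of_ne hQ.1 hne)]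
  · rw [hjoin, sup_comm, tcInv_addInv_tcInv_eq_tcInv_sup (T.card_le d c) (T.card_le b a)
      (hQ.1.tcInv_addInv_apply_of_ne hZ.1 hne.symm)]
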